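/- arXiv:1008.1085 — 2 statements merged into one kernel-verified Lean document; each statement's English description precedes it below -/
import Mathlib

section
/- Assume every embedding of K_{3,3,1} contains at least one pair of disjoint linked cycles using all 7 of its vertices, and every embedding of K_{4,4} contains at least two pairs of disjoint linked cycles, each using all 8 of its vertices. Then every embedding of K_{n,3,1} contains at least (n choose 3) + 2·(n choose 4) pairs of linked cycles. -/
/-- Abstract lower bound for the number of links in an embedding of `K_{n,3,1}`.
Model the vertices as `Fin n ⊕ Fin 4` (the part of size `n`, and the part of
size 3 together with the singleton vertex).  Let `L` be the set of linked pairs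
of disjoint cycles of an embedding, with `supp ℓ` the set of vertices used by a
link `ℓ`.  Assume every `K_{3,3,1}`-subgraph (given by a 3-element subset `S` of
the size-`n` part) contains a link using all 7 of its vertices, and every
`K_{4,4}`-subgraph (given by a 4-element subset) contains two distinct links
each using all 8 of its vertices.  Then `L` has at least
`(n choose 3) + 2 * (n choose 4)` elements. -/
theorem stmt_10 {α : Type*} [DecidableEq α] (n : ℕ)
    (L : Finset α) (supp : α → Finset (Fin n ⊕ Fin 4))
    (h331 : ∀ S : Finset (Fin n), S.card = 3 →
      ∃ ℓ ∈ L, supp ℓ = S.image Sum.inl ∪ Finset.univ.image Sum.inr)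
    (h44 : ∀ S : Finset (Fin n), S.card = 4 →
      ∃ ℓ₁ ∈ L, ∃ ℓ₂ ∈ L, ℓ₁ ≠ ℓ₂ ∧
        supp ℓ₁ = S.image Sum.inl ∪ Finset.univ.image Sum.inr ∧
        supp ℓ₂ = S.image Sum.inl ∪ Finset.univ.image Sum.inr) :
    n.choose 3 + 2 * n.choose 4 ≤ L.card := by
  classical
  set B : Finset (Fin n ⊕ Fin 4) := Finset.univ.image Sum.inr with hB
  set F : Finset (Fin n) → Finset α :=
    fun S => L.filter (fun ℓ => supp ℓ = S.image Sum.inl ∪ B) with hF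
  have key : ∀ (a : Fin n) (S : Finset (Fin n)),
      Sum.inl a ∈ S.image Sum.inl ∪ B ↔ a ∈ S := by
    intro a S
    simp [hB]
  have hinj : ∀ S S' : Finset (Fin n), (F S ∩ F S').Nonempty → S = S' := by
    intro S S' ⟨ℓ, hℓ⟩
    rw [Finset.mem_inter, hF] at hℓ
    simp only [Finset.mem_filter] at hℓ
    have h := hℓ.1.2.symm.trans hℓ.2.2
    ext a
    rw [← key a S, h, key a S']
  set T3 : Finset (Finset (Fin n)) := Finset.univ.powersetCard 3 with hT3
  set T4 : Finset (Finset (Fin n)) := Finset.univ.powersetCard 4 with hT4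
  have hmem3 : ∀ S ∈ T3, S.card = 3 := by
    intro S hS; rw [hT3, Finset.mem_powersetCard] at hS; exact hS.2
  have hmem4 : ∀ S ∈ T4, S.card = 4 := by
    intro S hS; rw [hT4, Finset.mem_powersetCard] at hS; exact hS.2
  have hdisjT : Disjoint T3 T4 := by
    rw [Finset.disjoint_left]
    intro S h3 h4
    have := (hmem3 S h3).symm.trans (hmem4 S h4)
    omega
  set T : Finset (Finset (Fin n)) := T3 ∪ T4 with hT
  have hdisj : ∀ S ∈ T, ∀ S' ∈ T, S ≠ S' → Disjoint (F S) (F S') := by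
    intro S _ S' _ hne
    by_contra hc
    rw [Finset.not_disjoint_iff_nonempty_inter] at hc
    exact hne (hinj S S' hc)
  have hsub : T.biUnion F ⊆ L := by
    intro ℓ hℓ
    rw [Finset.mem_biUnion] at hℓ
    obtain ⟨S, _, hℓ⟩ := hℓ
    exact (Finset.filter_subset _ _) hℓ
  have h1 : ∀ S ∈ T3, 1 ≤ (F S).card := by
    intro S hS
    obtain ⟨ℓ, hℓL, hℓs⟩ := h331 S (hmem3 S hS)
    exact Finset.card_pos.mpr ⟨ℓ, Finset.mem_filter.mpr ⟨hℓL, hℓs⟩⟩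
  have h2 : ∀ S ∈ T4, 2 ≤ (F S).card := by
    intro S hS
    obtain ⟨ℓ₁, h₁L, ℓ₂, h₂L, hne, hs₁, hs₂⟩ := h44 S (hmem4 S hS)
    exact Finset.one_lt_card.mpr ⟨ℓ₁, Finset.mem_filter.mpr ⟨h₁L, hs₁⟩,
      ℓ₂, Finset.mem_filter.mpr ⟨h₂L, hs₂⟩, hne⟩
  have hcard3 : T3.card = n.choose 3 := by
    rw [hT3, Finset.card_powersetCard, Finset.card_univ, Fintype.card_fin]
  have hcard4 : T4.card = n.choose 4 := by
    rw [hT4, Finset.card_powersetCard, Finset.card_univ, Fintype.card_fin]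
  calc n.choose 3 + 2 * n.choose 4
      = T3.card * 1 + T4.card * 2 := by rw [hcard3, hcard4]; ring
    _ ≤ (∑ S ∈ T3, (F S).card) + ∑ S ∈ T4, (F S).card := by
        gcongr with S hS S hS
        · calc T3.card * 1 = T3.card • 1 := by simp
            _ ≤ ∑ S ∈ T3, (F S).card := Finset.card_nsmul_le_sum T3 _ 1 h1
        · calc T4.card * 2 = T4.card • 2 := by simp
            _ ≤ ∑ S ∈ T4, (F S).card := Finset.card_nsmul_le_sum T4 _ 2 h2
    _ = ∑ S ∈ T, (F S).card := (Finset.sum_union hdisjT).symm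
    _ = (T.biUnion F).card := (Finset.card_biUnion hdisj).symm
    _ ≤ L.card := Finset.card_le_card hsub
end

section
/- In the complete multipartite graph K_{2,2,1,1,1,1} with parts {a,b}, {x,y}, {1}, {2}, {3}, {4}, there are exactly 16 subgraphs isomorphic to H₈ of the canonical form: the top vertex is one of a, b, x, y, the middle vertices are the two non-adjacent partners from the other size-2 part together with one of 1,2,3,4, and the remaining four vertices are the bottom vertices. -/
/-! Adjacency in a complete multipartite graph only asks that the endpoints lie in different
parts. Send the top vertex of `H₈` to `vtx i a`, the middle vertices to the other size-2 part and
to `sing j`, and the bottom vertices to the partner `vtx i (a + 1)` and the other three singletons.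
Then every edge of `H₈` joins different parts: the top's part contains no middle vertex, the middle
and bottom vertices occupy disjoint sets of parts, and the four bottom vertices lie in four distinct
parts. The 16 choices are told apart by the top vertex and by the only singleton among the middle
vertices. -/

open SimpleGraph

/-- The graph `H₈`, obtained from `K₇` by a triangle-Y move: vertex `0` is the
top vertex (degree 3), vertices `1,2,3` are the mutually non-adjacent middle
vertices (degree 5, adjacent to the top), and `4,5,6,7` are the bottom vertices
(degree 6, adjacent to everything except the top). -/
def H8 : SimpleGraph (Fin 8) where
  Adj u v := u ≠ v ∧
    ((![0, 1, 1, 1, 2, 2, 2, 2] u = (0 : Fin 3) ∧ ![0, 1, 1, 1, 2, 2, 2, 2] v = (1 : Fin 3)) ∨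
     (![0, 1, 1, 1, 2, 2, 2, 2] u = (1 : Fin 3) ∧ ![0, 1, 1, 1, 2, 2, 2, 2] v = (0 : Fin 3)) ∨
     (![0, 1, 1, 1, 2, 2, 2, 2] u = (1 : Fin 3) ∧ ![0, 1, 1, 1, 2, 2, 2, 2] v = (2 : Fin 3)) ∨
     (![0, 1, 1, 1, 2, 2, 2, 2] u = (2 : Fin 3) ∧ ![0, 1, 1, 1, 2, 2, 2, 2] v = (1 : Fin 3)) ∨
     (![0, 1, 1, 1, 2, 2, 2, 2] u = (2 : Fin 3) ∧ ![0, 1, 1, 1, 2, 2, 2, 2] v = (2 : Fin 3)))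
  symm := ⟨by intro u v h; exact ⟨h.1.symm, by tauto⟩⟩
  loopless := ⟨by intro v h; exact h.1 rfl⟩

/-- The vertex type of `K_{2,2,1,1,1,1}` with parts `{a,b}, {x,y}, {1},…,{4}`. -/
abbrev V221111 := Σ i, ![Fin 2, Fin 2, Fin 1, Fin 1, Fin 1, Fin 1] i

/-- The `a`-th vertex of the `i`-th size-2 part. -/
def vtx (i a : Fin 2) : V221111 := if i = 0 then ⟨0, a⟩ else ⟨1, a⟩

/-- The vertex of the `j`-th singleton part. -/
def sing : Fin 4 → V221111 :=
  ![⟨2, (0 : Fin 1)⟩, ⟨3, (0 : Fin 1)⟩, ⟨4, (0 : Fin 1)⟩, ⟨5, (0 : Fin 1)⟩]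

instance (i : Fin 6) : DecidableEq (![Fin 2, Fin 2, Fin 1, Fin 1, Fin 1, Fin 1] i) :=
  match i with
  | 0 | 1 => inferInstanceAs (DecidableEq (Fin 2))
  | 2 | 3 | 4 | 5 => inferInstanceAs (DecidableEq (Fin 1))

instance : DecidableRel H8.Adj := fun _ _ => inferInstanceAs (Decidable (_ ≠ _ ∧ _))

abbrev K221111 : SimpleGraph V221111 :=
  completeMultipartiteGraph ![Fin 2, Fin 2, Fin 1, Fin 1, Fin 1, Fin 1]

lemma vtx_inj : ∀ {i a i' a' : Fin 2}, vtx i a = vtx i' a' ↔ i = i' ∧ a = a' := by decide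

lemma vtx_ne_sing : ∀ i a j, vtx i a ≠ sing j := by decide

lemma sing_injective : Function.Injective sing := by decide

lemma canonicalChoice_injective :
    Function.Injective (fun p : (Fin 2 × Fin 2) × Fin 4 =>
      (vtx p.1.1 p.1.2,
        ({vtx (1 - p.1.1) 0, vtx (1 - p.1.1) 1, sing p.2} : Set V221111))) := by
  rintro ⟨⟨i, a⟩, j⟩ ⟨⟨i', a'⟩, j'⟩ h
  obtain ⟨htop, hmiddle⟩ := Prod.mk.inj h
  obtain ⟨rfl, rfl⟩ := vtx_inj.1 htop
  have hj : sing j ∈ ({vtx (1 - i) 0, vtx (1 - i) 1, sing j'} : Set V221111) := by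
    rw [← hmiddle]
    exact Or.inr (Or.inr rfl)
  simp only [Set.mem_insert_iff, Set.mem_singleton_iff, (vtx_ne_sing _ _ _).symm, false_or] at hj
  rw [sing_injective hj]

def canonicalCopy (i a : Fin 2) (j : Fin 4) : Fin 8 → V221111 :=
  ![vtx i a, vtx (1 - i) 0, vtx (1 - i) 1, sing j,
    vtx i (a + 1), sing (j + 1), sing (j + 2), sing (j + 3)]

lemma canonicalCopy_adj :
    ∀ i a j u v, H8.Adj u v → K221111.Adj (canonicalCopy i a j u) (canonicalCopy i a j v) := by
  decide

lemma canonicalCopy_injective : ∀ i a j, (canonicalCopy i a j).Injective := by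
  decide

def canonicalHom (i a : Fin 2) (j : Fin 4) : H8 →g K221111 :=
  ⟨canonicalCopy i a j, canonicalCopy_adj i a j _ _⟩

/-- In `K_{2,2,1,1,1,1}` there are exactly `4 · 4 = 16` canonical subgraphs
isomorphic to `H₈`: the top vertex is any of the 4 vertices of the size-2
parts, the middle vertices are the two vertices of the other size-2 part
together with one of the 4 singleton vertices, and the remaining four vertices
are the bottom vertices.  Distinct choices give distinct subgraphs. -/
theorem stmt_14 :
    let G := completeMultipartiteGraph ![Fin 2, Fin 2, Fin 1, Fin 1, Fin 1, Fin 1]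
    Fintype.card ((Fin 2 × Fin 2) × Fin 4) = 16 ∧
    Function.Injective (fun p : (Fin 2 × Fin 2) × Fin 4 =>
      (vtx p.1.1 p.1.2,
        ({vtx (1 - p.1.1) 0, vtx (1 - p.1.1) 1, sing p.2} : Set V221111))) ∧
    (∀ (i a : Fin 2) (j : Fin 4),
      ∃ f : H8 →g G, Function.Injective f ∧
        f 0 = vtx i a ∧
        ({f 1, f 2, f 3} : Set V221111) =
          {vtx (1 - i) 0, vtx (1 - i) 1, sing j}) := by
  intro G
  exact ⟨rfl, canonicalChoice_injective,
    fun i a j => ⟨canonicalHom i a j, canonicalCopy_injective i a j, rfl, rfl⟩⟩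
end
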